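/- Let $g \in C^1([t_0,\infty))$ with $g \geq 0$, $E = \int_{t_0}^\infty g(t)\,dt < \infty$, and suppose $g'(t) \leq a(t) g(t)$ for all $t \geq t_0$, where $a \geq 0$ and $M = \int_{t_0}^\infty a(t)\,dt < \infty$. Then $g(t) \leq \big((t_0 g(t_0) + 1)\exp(E+M) - 1\big) t^{-1}$ for all $t \geq t_0$. -/
import Mathlib


open MeasureTheory

theorem stmt0 (t0 : ℝ) (ht0 : 0 < t0) (g g' a : ℝ → ℝ)
    (hg0 : ∀ t, t0 ≤ t → 0 ≤ g t)
    (hgderiv : ∀ t, t0 ≤ t → HasDerivAt g (g' t) t)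
    (hg'cont : ContinuousOn g' (Set.Ici t0))
    (ha0 : ∀ t, t0 ≤ t → 0 ≤ a t)
    (hgint : IntegrableOn g (Set.Ici t0))
    (haint : IntegrableOn a (Set.Ici t0))
    (hbound : ∀ t, t0 ≤ t → g' t ≤ a t * g t) :
    ∀ t, t0 ≤ t →
      g t ≤ ((t0 * g t0 + 1) *
        Real.exp ((∫ s in Set.Ici t0, g s) + (∫ s in Set.Ici t0, a s)) - 1) / t := by
  intro t ht
  set E := ∫ s in Set.Ici t0, g s with hE
  set M := ∫ s in Set.Ici t0, a s with hM
  set u : ℝ → ℝ := fun s => s * g s + 1 with hu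
  set u' : ℝ → ℝ := fun s => g s + s * g' s with hu'
  have hupos : ∀ s, t0 ≤ s → (1:ℝ) ≤ u s := by
    intro s hs
    have : 0 ≤ s * g s := mul_nonneg (le_trans ht0.le hs) (hg0 s hs)
    simp [hu]; linarith
  have huderiv : ∀ s, t0 ≤ s → HasDerivAt u (u' s) s := by
    intro s hs
    have h1 : HasDerivAt (fun x => x * g x) (1 * g s + s * g' s) s :=
      (hasDerivAt_id s).mul (hgderiv s hs)
    have := h1.add_const 1
    simpa [hu, hu'] using this
  have hgcont : ContinuousOn g (Set.Ici t0) :=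
    fun s hs => (hgderiv s hs).continuousAt.continuousWithinAt
  have hucont : ContinuousOn u (Set.Ici t0) := by
    apply ContinuousOn.add _ continuousOn_const
    exact continuousOn_id.mul hgcont
  have hu'cont : ContinuousOn u' (Set.Ici t0) :=
    hgcont.add (continuousOn_id.mul hg'cont)
  -- derivative of log u
  have hLderiv : ∀ s ∈ Set.uIcc t0 t, HasDerivAt (fun x => Real.log (u x)) (u' s / u s) s := by
    intro s hs
    rw [Set.uIcc_of_le ht] at hs
    have hs0 : t0 ≤ s := hs.1
    have hne : u s ≠ 0 := by linarith [hupos s hs0]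
    exact (huderiv s hs0).log hne
  have hIcc : Set.Icc t0 t ⊆ Set.Ici t0 := fun x hx => hx.1
  have hquotcont : ContinuousOn (fun s => u' s / u s) (Set.Icc t0 t) :=
    (hu'cont.mono hIcc).div (hucont.mono hIcc)
      (fun s hs => by linarith [hupos s hs.1])
  have hquotint : IntervalIntegrable (fun s => u' s / u s) volume t0 t := by
    apply ContinuousOn.intervalIntegrable
    rwa [Set.uIcc_of_le ht]
  have hftc : ∫ s in t0..t, u' s / u s = Real.log (u t) - Real.log (u t0) :=
    intervalIntegral.integral_eq_sub_of_hasDerivAt hLderiv hquotint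
  -- comparison of integrands
  have hgint' : IntervalIntegrable g volume t0 t := by
    apply ContinuousOn.intervalIntegrable
    rw [Set.uIcc_of_le ht]; exact hgcont.mono hIcc
  have haint' : IntervalIntegrable a volume t0 t := by
    rw [intervalIntegrable_iff_integrableOn_Ioc_of_le ht]
    exact haint.mono_set (fun x hx => hx.1.le)
  have hmono : ∫ s in t0..t, u' s / u s ≤ ∫ s in t0..t, (g s + a s) := by
    apply intervalIntegral.integral_mono_on ht hquotint (hgint'.add haint')
    intro s hs
    have hs0 : t0 ≤ s := hs.1
    have hus : (1:ℝ) ≤ u s := hupos s hs0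
    have huspos : 0 < u s := by linarith
    rw [div_le_iff₀ huspos]
    have h1 : g' s ≤ a s * g s := hbound s hs0
    have hspos : 0 < s := lt_of_lt_of_le ht0 hs0
    have h2 : s * g' s ≤ s * (a s * g s) := by
      exact mul_le_mul_of_nonneg_left h1 hspos.le
    have hga : 0 ≤ g s := hg0 s hs0
    have haa : 0 ≤ a s := ha0 s hs0
    have key : u' s ≤ (g s + a s) * u s := by
      simp only [hu, hu']
      nlinarith [mul_nonneg hga hga, mul_nonneg hspos.le (mul_nonneg hga hga)]
    exact key
  -- bound tail integrals by full integrals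
  have hIoc : Set.Ioc t0 t ⊆ Set.Ici t0 := fun x hx => hx.1.le
  have hgle : ∫ s in t0..t, g s ≤ E := by
    rw [intervalIntegral.integral_of_le ht, hE]
    apply setIntegral_mono_set hgint
    · filter_upwards [self_mem_ae_restrict measurableSet_Ici] with x hx using hg0 x hx
    · exact Filter.Eventually.of_forall hIoc
  have hale : ∫ s in t0..t, a s ≤ M := by
    rw [intervalIntegral.integral_of_le ht, hM]
    apply setIntegral_mono_set haint
    · filter_upwards [self_mem_ae_restrict measurableSet_Ici] with x hx using ha0 x hx
    · exact Filter.Eventually.of_forall hIoc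
  have hsum : ∫ s in t0..t, (g s + a s) ≤ E + M := by
    rw [intervalIntegral.integral_add hgint' haint']
    linarith
  have hlog : Real.log (u t) ≤ Real.log (u t0) + (E + M) := by
    have := hftc ▸ le_trans hmono hsum
    linarith [hftc ▸ hmono]
  have hut : u t ≤ u t0 * Real.exp (E + M) := by
    have hutpos : 0 < u t := lt_of_lt_of_le one_pos (hupos t ht)
    have hut0pos : 0 < u t0 := lt_of_lt_of_le one_pos (hupos t0 le_rfl)
    calc u t = Real.exp (Real.log (u t)) := (Real.exp_log hutpos).symm
      _ ≤ Real.exp (Real.log (u t0) + (E + M)) := Real.exp_le_exp.mpr hlog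
      _ = u t0 * Real.exp (E + M) := by rw [Real.exp_add, Real.exp_log hut0pos]
  have htpos : 0 < t := lt_of_lt_of_le ht0 ht
  rw [le_div_iff₀ htpos]
  have : u t0 = t0 * g t0 + 1 := rfl
  have hut' : t * g t + 1 ≤ (t0 * g t0 + 1) * Real.exp (E + M) := by
    simpa [hu] using hut
  linarith
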